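/- For any subset I ⊆ {1,...,n}, the permutation τ_I whose one-line notation is j_1, ..., j_k, i_l, ..., i_1 (the complement in increasing order followed by I in decreasing order) has sign ∏_{i ∈ I} (-1)^{n-i}. -/

import Mathlib

/-!
Pass to `τ⁻¹`, which sends a value to its position in the word. For values `i < j`, the pair is
an inversion of `τ⁻¹` exactly when `i ∈ I`, because the complement comes first and increasing
and `I` comes last and decreasing. So each `i ∈ I` contributes one inversion for each of the
`n - 1 - i` larger values, and no other inversions occur.
-/

/-- The one-line word of `τ_I`: the elements of the complement of `I` in increasing order
followed by the elements of `I` in decreasing order.  Here `{1,…,n}` is modelled by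
`Fin n` (zero-indexed), so `(-1)^(n-i)` becomes `(-1)^(n-1-(i : ℕ))`. -/
def tauWord {n : ℕ} (I : Finset (Fin n)) : List (Fin n) :=
  (Iᶜ.sort (· ≤ ·)) ++ (I.sort (· ≤ ·)).reverse

open Finset

theorem Equiv.Perm.sign_eq_prod_of_lt_iff_mem {n : ℕ} (σ : Equiv.Perm (Fin n))
    (s : Finset (Fin n)) (h : ∀ i j, i < j → (σ j < σ i ↔ i ∈ s)) :
    Equiv.Perm.sign σ = ∏ i ∈ s, (-1 : ℤˣ) ^ (n - 1 - (i : ℕ)) := by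
  calc Equiv.Perm.sign σ = ∏ i, ∏ _j ∈ Ioi i, (if i ∈ s then -1 else 1 : ℤˣ) := by
        rw [σ.sign_eq_prod_prod_Ioi]
        refine prod_congr rfl fun i _ => prod_congr rfl fun j hj => ?_
        have hij := mem_Ioi.mp hj
        have hlt : σ i < σ j ↔ i ∉ s := by
          rw [← h i j hij, not_lt, (σ.injective.ne hij.ne).le_iff_lt]
        simp only [hlt, ite_not]
    _ = ∏ i, if i ∈ s then (-1 : ℤˣ) ^ (n - 1 - (i : ℕ)) else 1 := by
        simp only [prod_const, Fin.card_Ioi, ite_pow, one_pow]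
    _ = ∏ i ∈ s, (-1 : ℤˣ) ^ (n - 1 - (i : ℕ)) := by
        rw [prod_ite_mem, univ_inter]

theorem List.Pairwise.rel_of_symm_lt {n : ℕ} {R : Fin n → Fin n → Prop} {l : List (Fin n)}
    (hR : l.Pairwise R) (hl : l.length = n) (σ : Equiv.Perm (Fin n))
    (hσ : ∀ (p : Fin n) (hp : (p : ℕ) < l.length), σ p = l.get ⟨(p : ℕ), hp⟩)
    (x y : Fin n) (hxy : σ.symm x < σ.symm y) : R x y := by
  have hx := hσ (σ.symm x) ((σ.symm x).isLt.trans_eq hl.symm)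
  have hy := hσ (σ.symm y) ((σ.symm y).isLt.trans_eq hl.symm)
  rw [Equiv.apply_symm_apply] at hx hy
  rw [hx, hy]
  exact List.pairwise_iff_get.mp hR _ _ hxy

theorem length_tauWord {n : ℕ} (I : Finset (Fin n)) : (tauWord I).length = n := by
  simp [tauWord, card_compl_add_card]

theorem pairwise_tauWord {n : ℕ} (I : Finset (Fin n)) :
    (tauWord I).Pairwise fun x y => (x ∈ I → y ∈ I ∧ y < x) ∧ (y ∉ I → x < y) := by
  refine List.pairwise_append.mpr ⟨?_, ?_, ?_⟩
  · refine (sortedLT_sort _).pairwise.imp_of_mem fun hx _ hxy => ?_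
    rw [mem_sort, mem_compl] at hx
    exact ⟨fun h => absurd h hx, fun _ => hxy⟩
  · refine List.pairwise_reverse.mpr ((sortedLT_sort _).pairwise.imp_of_mem fun hx _ hxy => ?_)
    rw [mem_sort] at hx
    exact ⟨fun _ => ⟨hx, hxy⟩, absurd hx⟩
  · intro x hx y hy
    rw [mem_sort, mem_compl] at hx
    rw [List.mem_reverse, mem_sort] at hy
    exact ⟨fun h => absurd h hx, absurd hy⟩

theorem stmt_9 (n : ℕ) (I : Finset (Fin n)) (τ : Equiv.Perm (Fin n))
    (hτ : ∀ (p : Fin n) (hp : (p : ℕ) < (tauWord I).length),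
      τ p = (tauWord I).get ⟨(p : ℕ), hp⟩) :
    Equiv.Perm.sign τ = ∏ i ∈ I, (-1 : ℤˣ) ^ (n - 1 - (i : ℕ)) := by
  have hrel := (pairwise_tauWord I).rel_of_symm_lt (length_tauWord I) τ hτ
  rw [← Equiv.Perm.sign_symm]
  refine Equiv.Perm.sign_eq_prod_of_lt_iff_mem τ.symm I fun i j hij => ⟨fun hji => ?_, fun hi => ?_⟩
  · by_contra hi
    exact hij.not_gt ((hrel j i hji).2 hi)
  · by_contra hij'
    have hlt := (not_lt.mp hij').lt_of_ne (τ.symm.injective.ne hij.ne)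
    exact hij.not_gt ((hrel i j hlt).1 hi).2
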